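/- (Theorem 2, discrete time: a finite penalty enforces the zeroth-order condition.) Assume X_F is absorbing (f(x,a) ∈ X_F whenever x ∈ X_F) and nonempty, r(x,a) = 0 whenever x ∈ X_F, X_V and X_U are nonempty, and the bounded time-to-failure assumption holds with bound T_f. Define p* = (R_{X_U} · (1 − γ^{T_f+1})/(1 − γ) + (R_{Q_U} − R_{Q_V})/γ − sInf {V(x) | x ∈ X_V}) / γ^{T_f}. Then for every p with p ≥ 0 and p > p*, the zeroth-order condition holds: R_{Q_U} + γ · sSup {V_p(x) | x ∈ X_U} < R_{Q_V} + γ · sInf {V(x) | x ∈ X_V}. -/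

import Mathlib

open Set

noncomputable section

/-- Trajectory of the discrete-time system `x_{t+1} = f(x_t, u(x_t))` starting at `x`. -/
def traj {X U : Type*} (f : X → U → X) (u : X → U) (x : X) : ℕ → X
  | 0 => x
  | t + 1 => f (traj f u x t) (u (traj f u x t))

/-- The controller `u` is safe for the state `x`: the trajectory never enters the failure set. -/
def SafeFor {X U : Type*} (f : X → U → X) (XF : Set X) (u : X → U) (x : X) : Prop :=
  ∀ t : ℕ, traj f u x t ∉ XF

/-- The viability kernel: states from which some controller avoids failure forever. -/
def viab {X U : Type*} (f : X → U → X) (XF : Set X) : Set X :=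
  {x | ∃ u : X → U, SafeFor f XF u x}

/-- Discounted return `G(x,u)`. -/
def ret {X U : Type*} (γ : ℝ) (f : X → U → X) (r : X → U → ℝ) (x : X) (u : X → U) : ℝ :=
  ∑' t : ℕ, γ ^ t * r (traj f u x t) (u (traj f u x t))

/-- Discounted risk `ρ(x,u)`. -/
def risk {X U : Type*} (γ : ℝ) (f : X → U → X) (XF : Set X) (x : X) (u : X → U) : ℝ :=
  ∑' t : ℕ, γ ^ t * XF.indicator (fun _ => (1 : ℝ)) (traj f u x t)

/-- Penalized value function `V_p(x)`. -/
def Vpen {X U : Type*} (γ : ℝ) (f : X → U → X) (XF : Set X) (r : X → U → ℝ) (p : ℝ)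
    (x : X) : ℝ :=
  ⨆ u : X → U, (ret γ f r x u - p * risk γ f XF x u)

/-- Constrained value function `V(x)`: supremum of the return over safe controllers. -/
def Vcon {X U : Type*} (γ : ℝ) (f : X → U → X) (XF : Set X) (r : X → U → ℝ) (x : X) : ℝ :=
  ⨆ u : {u : X → U // SafeFor f XF u x}, ret γ f r x (u : X → U)

/-- `R_{Q_V}`: infimum of the reward over state-control pairs transitioning into the kernel. -/
def RQV {X U : Type*} (f : X → U → X) (XF : Set X) (r : X → U → ℝ) : ℝ :=
  sInf {y : ℝ | ∃ q : X × U, f q.1 q.2 ∈ viab f XF ∧ y = r q.1 q.2}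

/-- `R_{Q_U}`: supremum of the reward over state-control pairs transitioning out of the kernel. -/
def RQU {X U : Type*} (f : X → U → X) (XF : Set X) (r : X → U → ℝ) : ℝ :=
  sSup {y : ℝ | ∃ q : X × U, f q.1 q.2 ∉ viab f XF ∧ y = r q.1 q.2}

/-- `R_{X_U}`: supremum of the reward over the unviability kernel. -/
def RXU {X U : Type*} (f : X → U → X) (XF : Set X) (r : X → U → ℝ) : ℝ :=
  sSup {y : ℝ | ∃ x, x ∉ viab f XF ∧ ∃ a : U, y = r x a}

/-- `inf_{X_V} V`: infimum of the constrained value function over the viability kernel. -/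
def infV {X U : Type*} (γ : ℝ) (f : X → U → X) (XF : Set X) (r : X → U → ℝ) : ℝ :=
  sInf {y : ℝ | ∃ x ∈ viab f XF, y = Vcon γ f XF r x}

/-- `sup_{X_U} V_p`: supremum of the penalized value function over the unviability kernel. -/
def supVp {X U : Type*} (γ : ℝ) (f : X → U → X) (XF : Set X) (r : X → U → ℝ) (p : ℝ) : ℝ :=
  sSup {y : ℝ | ∃ x, x ∉ viab f XF ∧ y = Vpen γ f XF r p x}

/-!
From an unviable state every controller keeps the trajectory unviable (the complement of the
viability kernel is forward invariant once `X_F` is absorbing) and drives it into `X_F` within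
`T_f` steps, after which it stays there and collects no reward. Hence the return is at most the
geometric sum `R_{X_U} (1 - γ^{T_f+1}) / (1 - γ)` while the risk is at least `γ^{T_f}`, so
`sup_{X_U} V_p ≤ R_{X_U} (1 - γ^{T_f+1}) / (1 - γ) - p γ^{T_f}`, and `p > p*` is exactly what
makes this bound small enough for the zeroth-order condition.
-/

section Trajectory

variable {X U : Type*} (f : X → U → X) (u : X → U)

lemma traj_eq_iterate (x : X) (t : ℕ) : traj f u x t = (fun z => f z (u z))^[t] x := by
  induction t with
  | zero => rfl
  | succ t ih => rw [Function.iterate_succ_apply', ← ih]; rfl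

lemma traj_add (x : X) (s t : ℕ) : traj f u x (s + t) = traj f u (traj f u x s) t := by
  simp only [traj_eq_iterate, add_comm s t, Function.iterate_add_apply]

variable {f u} {S : Set X}

lemma traj_mem_of_mapsTo (hS : MapsTo (fun z => f z (u z)) S S) {x : X} (hx : x ∈ S) (t : ℕ) :
    traj f u x t ∈ S := by
  rw [traj_eq_iterate]
  exact hS.iterate t hx

lemma traj_mem_of_le (hS : MapsTo (fun z => f z (u z)) S S) {x : X} {s t : ℕ}
    (hs : traj f u x s ∈ S) (hst : s ≤ t) : traj f u x t ∈ S := by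
  obtain ⟨k, rfl⟩ := Nat.exists_eq_add_of_le hst
  rw [traj_add]
  exact traj_mem_of_mapsTo hS hs k

end Trajectory

section Viability

variable {X U : Type*} {f : X → U → X} {XF : Set X}

lemma notMem_viab_of_mem {x : X} (hx : x ∈ XF) : x ∉ viab f XF :=
  fun ⟨_, hu⟩ => hu 0 hx

lemma mem_viab_of_map_mem_viab {x : X} (hx : x ∉ XF) {a : U} (ha : f x a ∈ viab f XF) :
    x ∈ viab f XF := by
  classical
  obtain ⟨u, hu⟩ := ha
  refine ⟨Function.update u x a, fun t => ?_⟩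
  have hmaps : MapsTo (fun z => f z (Function.update u x a z))
      (insert x (range (traj f u (f x a)))) (insert x (range (traj f u (f x a)))) := by
    intro z hz
    by_cases hzx : z = x
    · subst hzx
      exact mem_insert_of_mem _ ⟨0, by simp [traj]⟩
    · obtain ⟨s, rfl⟩ := hz.resolve_left hzx
      exact mem_insert_of_mem _ ⟨s + 1, by simp [Function.update_of_ne hzx, traj]⟩
  rcases traj_mem_of_mapsTo hmaps (mem_insert x _) t with h | ⟨s, h⟩
  · rwa [h]
  · rw [← h]; exact hu s

lemma map_notMem_viab (habs : ∀ x ∈ XF, ∀ a : U, f x a ∈ XF) {x : X} (hx : x ∉ viab f XF)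
    (a : U) : f x a ∉ viab f XF := by
  by_cases hxF : x ∈ XF
  · exact notMem_viab_of_mem (habs x hxF a)
  · exact fun ha => hx (mem_viab_of_map_mem_viab hxF ha)

end Viability

section Bounds

variable {X U : Type*} {f : X → U → X} {XF : Set X} {γ : ℝ} {u : X → U} {x : X} {t T : ℕ}

lemma pow_le_risk (hγ0 : 0 ≤ γ) (hγ1 : γ < 1) (ht : t ≤ T) (hF : traj f u x t ∈ XF) :
    γ ^ T ≤ risk γ f XF x u := by
  have hind (s : ℕ) : 0 ≤ XF.indicator (fun _ => (1 : ℝ)) (traj f u x s) :=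
    indicator_nonneg (fun _ _ => zero_le_one) _
  have hsum : Summable fun s => γ ^ s * XF.indicator (fun _ => (1 : ℝ)) (traj f u x s) := by
    refine (summable_geometric_of_lt_one hγ0 hγ1).of_nonneg_of_le
      (fun s => mul_nonneg (pow_nonneg hγ0 s) (hind s)) (fun s => ?_)
    refine mul_le_of_le_one_right (pow_nonneg hγ0 s) ?_
    exact indicator_apply_le' (fun _ => le_rfl) (fun _ => zero_le_one)
  calc γ ^ T ≤ γ ^ t := pow_le_pow_of_le_one hγ0 hγ1.le ht
    _ = γ ^ t * XF.indicator (fun _ => (1 : ℝ)) (traj f u x t) := by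
      rw [indicator_of_mem hF, mul_one]
    _ ≤ risk γ f XF x u :=
      hsum.le_tsum t (fun s _ => mul_nonneg (pow_nonneg hγ0 s) (hind s))

variable {r : X → U → ℝ}

lemma ret_eq_sum_range (habs : ∀ x ∈ XF, ∀ a : U, f x a ∈ XF)
    (hr0 : ∀ x ∈ XF, ∀ a : U, r x a = 0) (ht : t ≤ T) (hF : traj f u x t ∈ XF) :
    ret γ f r x u = ∑ s ∈ Finset.range (T + 1), γ ^ s * r (traj f u x s) (u (traj f u x s)) := by
  refine tsum_eq_sum fun s hs => ?_
  have hTs : t ≤ s := by simp only [Finset.mem_range, not_lt] at hs; omega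
  rw [hr0 _ (traj_mem_of_le (fun z hz => habs z hz (u z)) hF hTs), mul_zero]

lemma ret_le_geom_sum (hγ0 : 0 ≤ γ) (habs : ∀ x ∈ XF, ∀ a : U, f x a ∈ XF)
    (hr0 : ∀ x ∈ XF, ∀ a : U, r x a = 0) (ht : t ≤ T) (hF : traj f u x t ∈ XF) {R : ℝ}
    (hR : ∀ s, r (traj f u x s) (u (traj f u x s)) ≤ R) :
    ret γ f r x u ≤ R * ∑ s ∈ Finset.range (T + 1), γ ^ s := by
  rw [ret_eq_sum_range habs hr0 ht hF, Finset.mul_sum]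
  exact Finset.sum_le_sum fun s _ => by
    rw [mul_comm R]
    exact mul_le_mul_of_nonneg_left (hR s) (pow_nonneg hγ0 s)

end Bounds

section PenalizedValue

variable {X U : Type*} {f : X → U → X} {XF : Set X} {γ : ℝ} {r : X → U → ℝ} {p R : ℝ} {T : ℕ}

lemma le_RXU (hr : ∃ C, ∀ x a, r x a ≤ C) {x : X} (hx : x ∉ viab f XF) (a : U) :
    r x a ≤ RXU f XF r := by
  obtain ⟨C, hC⟩ := hr
  exact le_csSup ⟨C, by rintro _ ⟨y, -, b, rfl⟩; exact hC y b⟩ ⟨x, hx, a, rfl⟩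

lemma ret_sub_mul_risk_le (hγ0 : 0 ≤ γ) (hγ1 : γ < 1) (hp0 : 0 ≤ p)
    (habs : ∀ x ∈ XF, ∀ a : U, f x a ∈ XF) (hr0 : ∀ x ∈ XF, ∀ a : U, r x a = 0)
    (hR : ∀ y ∉ viab f XF, ∀ a, r y a ≤ R) {x : X} (hx : x ∉ viab f XF) {u : X → U} {t : ℕ}
    (ht : t ≤ T) (hF : traj f u x t ∈ XF) :
    ret γ f r x u - p * risk γ f XF x u
      ≤ R * ∑ s ∈ Finset.range (T + 1), γ ^ s - p * γ ^ T := by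
  have hunviable (s : ℕ) : traj f u x s ∉ viab f XF :=
    traj_mem_of_mapsTo (S := (viab f XF)ᶜ) (fun z hz => map_notMem_viab habs hz (u z)) hx s
  have hret := ret_le_geom_sum hγ0 habs hr0 ht hF fun s => hR _ (hunviable s) _
  have hrisk := mul_le_mul_of_nonneg_left (pow_le_risk hγ0 hγ1 ht hF) hp0
  linarith

lemma supVp_le [Nonempty U] (hγ0 : 0 ≤ γ) (hγ1 : γ < 1) (hp0 : 0 ≤ p)
    (habs : ∀ x ∈ XF, ∀ a : U, f x a ∈ XF) (hr0 : ∀ x ∈ XF, ∀ a : U, r x a = 0)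
    (hR : ∀ y ∉ viab f XF, ∀ a, r y a ≤ R) (hUne : (viab f XF)ᶜ.Nonempty)
    (hT : ∀ x, x ∉ viab f XF → ∀ u : X → U, ∃ t ≤ T, traj f u x t ∈ XF) :
    supVp γ f XF r p ≤ R * ∑ s ∈ Finset.range (T + 1), γ ^ s - p * γ ^ T := by
  obtain ⟨x₀, hx₀⟩ := hUne
  refine csSup_le ⟨_, x₀, hx₀, rfl⟩ ?_
  rintro _ ⟨x, hx, rfl⟩
  refine ciSup_le fun u => ?_
  obtain ⟨t, ht, hF⟩ := hT x hx u
  exact ret_sub_mul_risk_le hγ0 hγ1 hp0 habs hr0 hR hx ht hF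

end PenalizedValue

theorem finite_penalty_enforces_zeroth_order_general {X U : Type*} [Nonempty U]
    (f : X → U → X) (XF : Set X) (γ : ℝ) (hγ0 : 0 < γ) (hγ1 : γ < 1)
    (r : X → U → ℝ) (hr : ∃ C : ℝ, ∀ x a, |r x a| ≤ C)
    (habs : ∀ x ∈ XF, ∀ a : U, f x a ∈ XF)
    (hr0 : ∀ x ∈ XF, ∀ a : U, r x a = 0)
    (hUne : ((viab f XF)ᶜ).Nonempty)
    (Tf : ℕ) (hTf : ∀ x, x ∉ viab f XF → ∀ u : X → U, ∃ t ≤ Tf, traj f u x t ∈ XF)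
    (p : ℝ) (hp0 : 0 ≤ p)
    (hp : p > (RXU f XF r * (1 - γ ^ (Tf + 1)) / (1 - γ)
        + (RQU f XF r - RQV f XF r) / γ - infV γ f XF r) / γ ^ Tf) :
    RQU f XF r + γ * supVp γ f XF r p < RQV f XF r + γ * infV γ f XF r := by
  have hRXU : ∀ y ∉ viab f XF, ∀ a, r y a ≤ RXU f XF r :=
    fun y hy a => le_RXU (hr.imp fun _ hC x a => le_of_abs_le (hC x a)) hy a
  have hgeom : ∑ s ∈ Finset.range (Tf + 1), γ ^ s = (1 - γ ^ (Tf + 1)) / (1 - γ) := by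
    rw [geom_sum_eq hγ1.ne, ← neg_sub, ← neg_sub 1 γ, neg_div_neg_eq]
  have hsup := supVp_le hγ0.le hγ1 hp0 habs hr0 hRXU hUne hTf
  rw [hgeom, ← mul_div_assoc] at hsup
  rw [gt_iff_lt, div_lt_iff₀ (pow_pos hγ0 Tf)] at hp
  have hp' := mul_lt_mul_of_pos_left hp hγ0
  rw [mul_sub, mul_add, mul_div_cancel₀ _ hγ0.ne'] at hp'
  calc RQU f XF r + γ * supVp γ f XF r p
      ≤ RQU f XF r + γ * (RXU f XF r * (1 - γ ^ (Tf + 1)) / (1 - γ) - p * γ ^ Tf) := by gcongr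
    _ < RQV f XF r + γ * infV γ f XF r := by linarith

/-- Theorem 2, discrete time: any penalty larger than the finite threshold
`p*` enforces the zeroth-order condition. -/
theorem finite_penalty_enforces_zeroth_order {X U : Type*} [Nonempty U]
    (f : X → U → X) (XF : Set X) (γ : ℝ) (hγ0 : 0 < γ) (hγ1 : γ < 1)
    (r : X → U → ℝ) (hr : ∃ C : ℝ, ∀ x a, |r x a| ≤ C)
    (habs : ∀ x ∈ XF, ∀ a : U, f x a ∈ XF) (hFne : XF.Nonempty)
    (hr0 : ∀ x ∈ XF, ∀ a : U, r x a = 0)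
    (hVne : (viab f XF).Nonempty) (hUne : ((viab f XF)ᶜ).Nonempty)
    (Tf : ℕ) (hTf : ∀ x, x ∉ viab f XF → ∀ u : X → U, ∃ t ≤ Tf, traj f u x t ∈ XF)
    (p : ℝ) (hp0 : 0 ≤ p)
    (hp : p > (RXU f XF r * (1 - γ ^ (Tf + 1)) / (1 - γ)
        + (RQU f XF r - RQV f XF r) / γ - infV γ f XF r) / γ ^ Tf) :
    RQU f XF r + γ * supVp γ f XF r p < RQV f XF r + γ * infV γ f XF r :=
  finite_penalty_enforces_zeroth_order_general f XF γ hγ0 hγ1 r hr habs hr0 hUne Tf hTf p hp0 hp
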